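/- Let X and Y be Banach spaces and T : X → Y a compact linear operator. Then there exists a sequence (u_n) in X* with ‖u_n‖ → 0 such that ‖Tx‖ ≤ sup_n |u_n(x)| for every x ∈ X. -/

import Mathlib

/-!
The functionals `g ∘ T` with `‖g‖ ≤ 1` form a totally bounded set `K ⊆ X*` (Schauder): on the
totally bounded set `T (closedBall 0 1)` such a `g` is known up to `ε` from its values on a finite
net, and those values range over a bounded subset of a finite-dimensional space.

By Grothendieck's telescoping argument a totally bounded set lies in the closed convex hull of `0`
and a null sequence: take finite `4^{-(k+1)}`-nets `N k ⊆ K`, give each `a ∈ N k` (`k ≥ 1`) a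
parent in `N (k-1)` within `4^{-k}` (at level `0` the parent is `0`), and enumerate the vectors
`2^{k+1} • (a - parent a)`, of norm `< 2^{1-k}`. Every `a ∈ N m` is then a convex combination of
these vectors and `0`.

Since `v ↦ ‖v x‖` is convex and continuous, `‖v x‖ ≤ supₙ ‖uₙ x‖` on that hull, in particular for
`v = g ∘ T`, and Hahn–Banach provides `g` with `g (T x) = ‖T x‖`.
-/

open Filter Metric Set Topology Pointwise

theorem exists_tendsto_norm_zero_forall_subset_range {E : Type*} [SeminormedAddCommGroup E]
    {F : ℕ → Set E} (hF : ∀ k, (F k).Finite)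
    (hsmall : ∀ ε > 0, ∀ᶠ k in atTop, ∀ e ∈ F k, ‖e‖ < ε) :
    ∃ u : ℕ → E, Tendsto (fun n => ‖u n‖) atTop (𝓝 0) ∧ ∀ k, F k ⊆ range u := by
  classical
  let L : ℕ → List E := fun k => (hF k).toFinset.toList
  let u : ℕ → E := fun n => (L n.unpair.1)[n.unpair.2]?.getD 0
  have mem_of_ne_zero (n : ℕ) (hn : u n ≠ 0) :
      n.unpair.2 < (L n.unpair.1).length ∧ u n ∈ F n.unpair.1 := by
    have hlt : n.unpair.2 < (L n.unpair.1).length := by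
      by_contra h
      exact hn (by simp [u, List.getElem?_eq_none (not_lt.1 h)])
    have hu : u n = (L n.unpair.1)[n.unpair.2] := by simp [u, hlt]
    exact ⟨hlt, hu ▸ (hF _).mem_toFinset.1 (Finset.mem_toList.1 (List.getElem_mem hlt))⟩
  refine ⟨u, ?_, fun k e he => ?_⟩
  · rw [← Nat.cofinite_eq_atTop]
    refine tendsto_order.2 ⟨fun a ha => .of_forall fun n => ha.trans_le (norm_nonneg _),
      fun ε hε => eventually_cofinite.2 ?_⟩
    obtain ⟨K, hK⟩ := eventually_atTop.1 (hsmall ε hε)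
    refine ((finite_Iio K).biUnion fun k _ => (finite_Iio (L k).length).image (Nat.pair k)).subset
      fun n hn => ?_
    have hne : u n ≠ 0 := fun h => hn (by simpa [h] using hε)
    obtain ⟨hlt, hmem⟩ := mem_of_ne_zero n hne
    have hK' : n.unpair.1 < K := not_le.1 fun h => hn (hK _ h _ hmem)
    exact mem_iUnion₂.2 ⟨_, hK', _, hlt, Nat.pair_unpair n⟩
  · obtain ⟨i, hi, rfl⟩ := List.mem_iff_getElem.1 (by simpa [L] using he : e ∈ L k)
    exact ⟨Nat.pair k i, by simp [u, hi]⟩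

-- `a ∈ N m` telescopes as `Σ_{k ≤ m} 2^{-(k+1)} • (2^{k+1} • (a_k - a_{k-1}))` along its chain of
-- parents `a_k = p k a_{k+1}`, with `a_m = a` and `a_{-1} = 0`.
theorem Convex.subset_smul_of_scaled_differences_mem {E : Type*} [AddCommGroup E] [Module ℝ E]
    {H : Set E} (hH : Convex ℝ H) {N : ℕ → Set E} {p : ℕ → E → E}
    (hp : ∀ k, ∀ a ∈ N (k + 1), p k a ∈ N k) (h0 : ∀ a ∈ N 0, (2 : ℝ) • a ∈ H)
    (hstep : ∀ k, ∀ a ∈ N (k + 1), (2 : ℝ) ^ (k + 2) • (a - p k a) ∈ H) (m : ℕ) :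
    N m ⊆ (1 - (1 / 2 : ℝ) ^ (m + 1)) • H := by
  induction m with
  | zero =>
    intro a ha
    refine ⟨(2 : ℝ) • a, h0 a ha, ?_⟩
    simp only [smul_smul]; norm_num
  | succ m ih =>
    intro a ha
    have hsplit : a = p m a + (1 / 2 : ℝ) ^ (m + 2) • ((2 : ℝ) ^ (m + 2) • (a - p m a)) := by
      rw [smul_smul, ← mul_pow]; norm_num
    have hmem := add_mem_add (ih (hp m a ha))
      (smul_mem_smul_set (a := (1 / 2 : ℝ) ^ (m + 2)) (hstep m a ha))
    rw [← hH.add_smul (sub_nonneg.2 (pow_le_one₀ (by norm_num) (by norm_num))) (by positivity)]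
      at hmem
    rw [hsplit]
    convert hmem using 2
    ring

theorem exists_tendsto_norm_zero_subset_closure_convexHull {E : Type*}
    [SeminormedAddCommGroup E] [NormedSpace ℝ E] {K : Set E} (hK : TotallyBounded K) :
    ∃ u : ℕ → E, Tendsto (fun n => ‖u n‖) atTop (𝓝 0) ∧
      K ⊆ closure (convexHull ℝ (insert 0 (range u))) := by
  set δ : ℕ → ℝ := fun k => (1 / 4) ^ (k + 1)
  choose N hNK hNfin hNcover using fun k =>
    finite_approx_of_totallyBounded hK (δ k) (by positivity)
  have hparent (k : ℕ) (a : E) : ∃ b, a ∈ K → b ∈ N k ∧ ‖a - b‖ < δ k := by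
    by_cases ha : a ∈ K
    · obtain ⟨b, hb, hab⟩ := mem_iUnion₂.1 (hNcover k ha)
      exact ⟨b, fun _ => ⟨hb, by rwa [mem_ball, dist_eq_norm] at hab⟩⟩
    · exact ⟨0, fun h => absurd h ha⟩
  choose p hp using hparent
  let parent : ℕ → E → E := fun k a => if k = 0 then 0 else p (k - 1) a
  let F : ℕ → Set E := fun k => (fun a => (2 : ℝ) ^ (k + 1) • (a - parent k a)) '' N k
  have hsmall : ∀ ε > 0, ∀ᶠ k in atTop, ∀ e ∈ F k, ‖e‖ < ε := by
    intro ε hε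
    obtain ⟨j₀, hj₀⟩ := exists_pow_lt_of_lt_one hε (by norm_num : (1 / 2 : ℝ) < 1)
    refine eventually_atTop.2 ⟨j₀ + 1, fun k hk => ?_⟩
    obtain ⟨j, rfl⟩ : ∃ j, k = j + 1 := ⟨k - 1, by omega⟩
    rintro _ ⟨a, ha, rfl⟩
    calc ‖(2 : ℝ) ^ (j + 1 + 1) • (a - parent (j + 1) a)‖
        = 2 ^ (j + 2) * ‖a - p j a‖ := by simp [parent, norm_smul]
      _ < 2 ^ (j + 2) * δ j := by gcongr; exact (hp j a (hNK _ ha)).2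
      _ = (1 / 2) ^ j := by
        rw [pow_succ 2 (j + 1), mul_right_comm, ← mul_pow]; norm_num; ring
      _ ≤ (1 / 2) ^ j₀ := pow_le_pow_of_le_one (by norm_num) (by norm_num) (by omega)
      _ < ε := hj₀
  obtain ⟨u, hu, hFu⟩ :=
    exists_tendsto_norm_zero_forall_subset_range (fun k => (hNfin k).image _) hsmall
  refine ⟨u, hu, fun v hv => ?_⟩
  set H := convexHull ℝ (insert 0 (range u))
  have hH : Convex ℝ H := convex_convexHull ℝ _
  have hH0 : (0 : E) ∈ H := subset_convexHull ℝ _ (mem_insert _ _)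
  have hFH (k : ℕ) : F k ⊆ H :=
    (hFu k).trans ((subset_insert _ _).trans (subset_convexHull ℝ _))
  have hNH := hH.subset_smul_of_scaled_differences_mem (fun k a ha => (hp k a (hNK _ ha)).1)
    (fun a ha => by simpa [parent] using hFH 0 ⟨a, ha, rfl⟩)
    (fun k a ha => by simpa [parent] using hFH (k + 1) ⟨a, ha, rfl⟩)
  rw [Metric.mem_closure_iff]
  intro ε hε
  obtain ⟨m, hm⟩ := exists_pow_lt_of_lt_one hε (by norm_num : (1 / 4 : ℝ) < 1)
  obtain ⟨hpv, hdist⟩ := hp m v hv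
  obtain ⟨w, hw, hpw⟩ := hNH m hpv
  refine ⟨p m v, hpw ▸ hH.smul_mem_of_zero_mem hH0 hw ⟨?_, ?_⟩, ?_⟩
  · exact sub_nonneg.2 (pow_le_one₀ (by norm_num) (by norm_num))
  · exact sub_le_self _ (by positivity)
  · rw [dist_eq_norm]
    exact hdist.trans ((pow_le_pow_of_le_one (by norm_num) (by norm_num) (by omega)).trans_lt hm)

section

variable {𝕜 X Y F : Type*} [RCLike 𝕜]
  [NormedAddCommGroup X] [NormedSpace 𝕜 X] [NormedAddCommGroup Y] [NormedSpace 𝕜 Y]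
  [NormedAddCommGroup F] [NormedSpace 𝕜 F]

theorem ContinuousLinearMap.norm_comp_sub_comp_le {T : X →L[𝕜] Y} {A : Set Y} {δ : ℝ}
    (hA : T '' closedBall 0 1 ⊆ ⋃ a ∈ A, ball a δ) {g h : Y →L[𝕜] F} (hg : ‖g‖ ≤ 1)
    (hh : ‖h‖ ≤ 1) (hgh : ∀ a ∈ A, ‖g a - h a‖ < δ) : ‖g.comp T - h.comp T‖ ≤ 3 * δ := by
  have hδ : 0 ≤ δ := by
    obtain ⟨a, ha, -⟩ := mem_iUnion₂.1 (hA ⟨0, mem_closedBall_self zero_le_one, rfl⟩)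
    exact (norm_nonneg _).trans (hgh a ha).le
  refine opNorm_le_of_unit_norm (by positivity) fun x hx => ?_
  obtain ⟨a, ha, hTa⟩ := mem_iUnion₂.1 (hA ⟨x, by simp [hx], rfl⟩)
  rw [mem_ball, dist_eq_norm] at hTa
  have hg' : ‖g (T x - a)‖ ≤ δ :=
    (g.le_of_opNorm_le hg _).trans (by simpa using hTa.le)
  have hh' : ‖h (a - T x)‖ ≤ δ :=
    (h.le_of_opNorm_le hh _).trans (by simpa [norm_sub_rev] using hTa.le)
  calc ‖(g.comp T - h.comp T) x‖ = ‖g (T x - a) + (g a - h a) + h (a - T x)‖ := by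
        simp only [sub_apply, comp_apply, map_sub]; abel_nf
    _ ≤ ‖g (T x - a)‖ + ‖g a - h a‖ + ‖h (a - T x)‖ := norm_add₃_le
    _ ≤ 3 * δ := by linarith [(hgh a ha).le]

theorem IsCompactOperator.totallyBounded_image_comp_closedBall [ProperSpace F] {T : X →L[𝕜] Y}
    (hT : IsCompactOperator T) :
    TotallyBounded ((fun g : Y →L[𝕜] F => g.comp T) '' closedBall 0 1) := by
  rw [Metric.totallyBounded_iff]
  intro ε hε
  obtain ⟨A, hAfin, hA⟩ :
      ∃ A : Set Y, A.Finite ∧ T '' closedBall 0 1 ⊆ ⋃ a ∈ A, ball a (ε / 4) := by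
    obtain ⟨C, hC, hsub⟩ := hT.image_closedBall_subset_compact 1
    exact Metric.totallyBounded_iff.1 (hC.totallyBounded.subset hsub) _ (by positivity)
  have : Fintype A := hAfin.fintype
  let Φ : (Y →L[𝕜] F) →L[𝕜] (A → F) :=
    ContinuousLinearMap.pi fun a => ContinuousLinearMap.apply 𝕜 F (a : Y)
  have hΦ : TotallyBounded (Φ '' closedBall 0 1) :=
    (Φ.lipschitz.isBounded_image isBounded_closedBall).isCompact_closure.totallyBounded.subset
      subset_closure
  obtain ⟨t, htB, htfin, hcover⟩ :=
    exists_subset_image_finite_and.1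
      (finite_approx_of_totallyBounded hΦ _ (by positivity : 0 < ε / 4))
  refine ⟨(fun g => g.comp T) '' t, htfin.image _, ?_⟩
  rintro _ ⟨g, hg, rfl⟩
  obtain ⟨_, ⟨h, ht, rfl⟩, hgh⟩ := mem_iUnion₂.1 (hcover ⟨g, hg, rfl⟩)
  refine mem_iUnion₂.2 ⟨h.comp T, mem_image_of_mem _ ht, ?_⟩
  rw [mem_ball, dist_eq_norm]
  have hclose (a : Y) (ha : a ∈ A) : ‖g a - h a‖ < ε / 4 := by
    rw [← dist_eq_norm]
    exact (dist_le_pi_dist (Φ g) (Φ h) ⟨a, ha⟩).trans_lt hgh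
  calc ‖g.comp T - h.comp T‖ ≤ 3 * (ε / 4) :=
        ContinuousLinearMap.norm_comp_sub_comp_le hA (by simpa using hg) (by simpa using htB ht)
          hclose
    _ < ε := by linarith

theorem norm_apply_le_of_mem_closure_convexHull {s : Set (X →L[𝕜] 𝕜)} {v : X →L[𝕜] 𝕜}
    (hv : v ∈ closure (convexHull ℝ (insert 0 s))) (x : X) {S : ℝ} (hS0 : 0 ≤ S)
    (hS : ∀ w ∈ s, ‖w x‖ ≤ S) : ‖v x‖ ≤ S := by
  let ev : (X →L[𝕜] 𝕜) →L[𝕜] 𝕜 := ContinuousLinearMap.apply 𝕜 𝕜 x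
  have hclosed : IsClosed (ev ⁻¹' closedBall 0 S) := isClosed_closedBall.preimage ev.continuous
  have hconvex : Convex ℝ (ev ⁻¹' closedBall 0 S) :=
    (convex_closedBall 0 S).linear_preimage ((ev : (X →L[𝕜] 𝕜) →ₗ[𝕜] 𝕜).restrictScalars ℝ)
  have hsub : insert 0 s ⊆ ev ⁻¹' closedBall 0 S := by
    rintro w (rfl | hw)
    · simpa [ev] using hS0
    · simpa [ev] using hS w hw
  simpa [ev] using closure_minimal (convexHull_min hsub hconvex) hclosed hv

end

theorem terzioglu_necessity_general {𝕜 X Y : Type*} [RCLike 𝕜]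
    [NormedAddCommGroup X] [NormedSpace 𝕜 X]
    [NormedAddCommGroup Y] [NormedSpace 𝕜 Y]
    (T : X →L[𝕜] Y) (hT : IsCompactOperator T) :
    ∃ u : ℕ → (X →L[𝕜] 𝕜),
      Tendsto (fun n => ‖u n‖) atTop (nhds 0) ∧
      ∀ x : X, ‖T x‖ ≤ ⨆ n, ‖u n x‖ := by
  obtain ⟨u, hu, hK⟩ := exists_tendsto_norm_zero_subset_closure_convexHull
    (hT.totallyBounded_image_comp_closedBall (F := 𝕜))
  refine ⟨u, hu, fun x => ?_⟩
  have hbdd : BddAbove (range fun n => ‖u n x‖) := by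
    obtain ⟨C, hC⟩ := hu.bddAbove_range
    exact ⟨C * ‖x‖, by rintro _ ⟨n, rfl⟩; exact (u n).le_of_opNorm_le (hC ⟨n, rfl⟩) x⟩
  obtain ⟨g, hg, hgx⟩ := exists_dual_vector'' 𝕜 (T x)
  calc ‖T x‖ = ‖g.comp T x‖ := by simp [hgx]
    _ ≤ ⨆ n, ‖u n x‖ :=
      norm_apply_le_of_mem_closure_convexHull (hK ⟨g, by simpa using hg, rfl⟩) x
        ((norm_nonneg _).trans (le_ciSup hbdd 0)) (by rintro _ ⟨n, rfl⟩; exact le_ciSup hbdd n)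

/-- If `T : X → Y` is a compact operator between Banach spaces, then there is a sequence `(uₙ)`
of continuous linear functionals on `X` with `‖uₙ‖ → 0` such that `‖T x‖ ≤ sup_n |uₙ x|`
for every `x ∈ X`. -/
theorem terzioglu_necessity {𝕜 X Y : Type*} [RCLike 𝕜]
    [NormedAddCommGroup X] [NormedSpace 𝕜 X] [CompleteSpace X]
    [NormedAddCommGroup Y] [NormedSpace 𝕜 Y] [CompleteSpace Y]
    (T : X →L[𝕜] Y) (hT : IsCompactOperator T) :
    ∃ u : ℕ → (X →L[𝕜] 𝕜),
      Tendsto (fun n => ‖u n‖) atTop (nhds 0) ∧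
      ∀ x : X, ‖T x‖ ≤ ⨆ n, ‖u n x‖ :=
  terzioglu_necessity_general T hT
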